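/- Singular integration: let r ∈ ℕ₀, let 𝖪 be a regularising kernel of order (0,r) (i.e. a β-regularising kernel for some β > 0, with m = 0), and let f ∈ 𝒟'(ℝ^d) be a distribution of order r. Then the series 𝖪f(ψ) := Σ_{n≥0} f(𝖪_n^*ψ) converges for every test function ψ, and 𝖪f is a well-defined distribution of order r. Moreover, if 𝖪 is a regularising kernel of order (0,r) for every r ∈ ℕ₀, then 𝖪f is well-defined for every distribution f ∈ 𝒟'(ℝ^d). -/

import Mathlib

open MeasureTheory Metric Filter
open scoped Classical Pointwise Topology

noncomputable section

/-- Euclidean space `ℝ^d`. -/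
abbrev Ed (d : ℕ) := EuclideanSpace ℝ (Fin d)

/-- Multi-indices `k ∈ ℕ₀^d`. -/
abbrev MIdx (d : ℕ) := Fin d → ℕ

variable {d : ℕ}

/-- Degree `|k|` of a multi-index. -/
def mdeg (k : MIdx d) : ℕ := ∑ i, k i

/-- Factorial `k!` of a multi-index. -/
def mfact (k : MIdx d) : ℕ := ∏ i, Nat.factorial (k i)

/-- Monomial `v^k`. -/
def mpow (v : Ed d) (k : MIdx d) : ℝ := ∏ i, (v i) ^ (k i)

/-- Partial (line) derivative in coordinate `i`. -/
def pd (i : Fin d) (f : Ed d → ℝ) : Ed d → ℝ :=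
  fun x => lineDeriv ℝ f x (EuclideanSpace.single i (1:ℝ))

/-- Iterated partial derivative `∂^k`. -/
def mderiv (k : MIdx d) (f : Ed d → ℝ) : Ed d → ℝ :=
  (List.finRange d).foldr (fun i g => (pd i)^[k i] g) f

/-- Smooth compactly supported test function. -/
def IsTest (φ : Ed d → ℝ) : Prop := ContDiff ℝ (⊤ : ℕ∞) φ ∧ HasCompactSupport φ

/-- The `C^r` norm `max_{|k| ≤ r} ‖∂^k φ‖_∞`. -/
def crNorm (r : ℕ) (φ : Ed d → ℝ) : ℝ :=
  ⨆ k : {k : MIdx d // mdeg k ≤ r}, ⨆ x : Ed d, |mderiv k.1 φ x|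

/-- Generalized functions: arbitrary functionals on functions on `ℝ^d`. -/
abbrev DFunc (d : ℕ) := (Ed d → ℝ) → ℝ

/-- `f` is a distribution in `𝒟'(ℝ^d)`: linear on test functions and,
on every compact, bounded by some `C^r` norm. -/
def IsDistribution (f : DFunc d) : Prop :=
  (∀ φ ψ : Ed d → ℝ, IsTest φ → IsTest ψ → f (φ + ψ) = f φ + f ψ) ∧
  (∀ (c : ℝ) (φ : Ed d → ℝ), IsTest φ → f (c • φ) = c * f φ) ∧
  (∀ K : Set (Ed d), IsCompact K → ∃ (r : ℕ) (C : ℝ),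
    ∀ φ : Ed d → ℝ, IsTest φ → tsupport φ ⊆ K → |f φ| ≤ C * crNorm r φ)

/-- `f` is a distribution of order `r` (bound by the `C^r` norm on every compact). -/
def DistOrder (f : DFunc d) (r : ℕ) : Prop :=
  ∀ K : Set (Ed d), IsCompact K → ∃ C : ℝ,
    ∀ φ : Ed d → ℝ, IsTest φ → tsupport φ ⊆ K → |f φ| ≤ C * crNorm r φ

/-- `φ` is of class `C^r`: all iterated coordinate-partials up to order `r`
exist and are continuous. -/
def IsCr (r : ℕ) (φ : Ed d → ℝ) : Prop :=
  ∀ k : MIdx d, mdeg k ≤ r →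
    Continuous (mderiv k φ) ∧
    (mdeg k < r → ∀ (i : Fin d) (x : Ed d),
      LineDifferentiableAt ℝ (mderiv k φ) x (EuclideanSpace.single i (1:ℝ)))

/-- The functional `f` acts canonically (linearly, with local order-`r` bounds) on all
compactly supported `C^r` functions; i.e. `f` incorporates the canonical extension of a
distribution of order `r`. -/
def OrderExt (f : DFunc d) (r : ℕ) : Prop :=
  (∀ φ ψ : Ed d → ℝ, IsCr r φ → HasCompactSupport φ → IsCr r ψ → HasCompactSupport ψ →
      f (φ + ψ) = f φ + f ψ) ∧
  (∀ (c : ℝ) (φ : Ed d → ℝ), IsCr r φ → HasCompactSupport φ → f (c • φ) = c * f φ) ∧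
  (∀ K : Set (Ed d), IsCompact K → ∃ C : ℝ,
    ∀ φ : Ed d → ℝ, IsCr r φ → HasCompactSupport φ → tsupport φ ⊆ K → |f φ| ≤ C * crNorm r φ)

/-- The scaled recentred test function `φ_x^λ(y) = λ^{-d} φ(λ^{-1}(y-x))`. -/
def scTF (φ : Ed d → ℝ) (x : Ed d) (l : ℝ) : Ed d → ℝ :=
  fun y => (l ^ d)⁻¹ * φ (l⁻¹ • (y - x))

/-- The class `𝓑^r` of smooth test functions supported in the closed unit ball with
all derivatives of order `≤ r` bounded by one. -/
def TB (d r : ℕ) : Set (Ed d → ℝ) :=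
  {φ | IsTest φ ∧ tsupport φ ⊆ closedBall (0 : Ed d) 1 ∧
    ∀ k : MIdx d, mdeg k ≤ r → ∀ x, |mderiv k φ x| ≤ 1}

/-- The class `𝓑_γ` of smooth test functions supported in the closed unit ball which
annihilate all monomials of degree `≤ γ`. -/
def TAnn (d : ℕ) (γ : ℝ) : Set (Ed d → ℝ) :=
  {φ | IsTest φ ∧ tsupport φ ⊆ closedBall (0 : Ed d) 1 ∧
    ∀ k : MIdx d, (mdeg k : ℝ) ≤ γ → (∫ z, φ z * mpow z k) = 0}

/-- The class `𝓑^r_γ = 𝓑^r ∩ 𝓑_γ`. -/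
def TBAnn (d r : ℕ) (γ : ℝ) : Set (Ed d → ℝ) := TB d r ∩ TAnn d γ

/-- A germ: a family of functionals indexed by base points. -/
abbrev GermF (d : ℕ) := Ed d → DFunc d

/-- A germ of distributions, measurable in the base point. -/
def IsGerm (F : GermF d) : Prop :=
  (∀ x, IsDistribution (F x)) ∧ ∀ φ : Ed d → ℝ, IsTest φ → Measurable (fun x => F x φ)

/-- Homogeneity bound with constant `C`: `|F_x(φ_x^λ)| ≤ C λ^ᾱ` on `(K, λ̄)` at order `r`. -/
def HomB (F : GermF d) (a : ℝ) (r : ℕ) (K : Set (Ed d)) (lb C : ℝ) : Prop :=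
  ∀ x ∈ K, ∀ l : ℝ, 0 < l → l ≤ lb → ∀ φ ∈ TB d r, |F x (scTF φ x l)| ≤ C * l ^ a

/-- Coherence bound with constant `C`:
`|(F_y - F_x)(φ_x^λ)| ≤ C λ^α (|y-x|+λ)^{γ-α}` on `(K, λ̄)` at order `r`. -/
def CohB (F : GermF d) (a g : ℝ) (r : ℕ) (K : Set (Ed d)) (lb C : ℝ) : Prop :=
  ∀ x ∈ K, ∀ y ∈ K, ∀ l : ℝ, 0 < l → l ≤ lb → ∀ φ ∈ TB d r,
    |F y (scTF φ x l) - F x (scTF φ x l)| ≤ C * l ^ a * (dist y x + l) ^ (g - a)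

/-- `F` is `ᾱ`-homogeneous of order `r`. -/
def Homog (F : GermF d) (a : ℝ) (r : ℕ) : Prop :=
  ∀ K : Set (Ed d), IsCompact K → ∀ lb : ℝ, 1 ≤ lb → ∃ C, HomB F a r K lb C

/-- `F` is `(α, γ)`-coherent of order `r`. -/
def Coh (F : GermF d) (a g : ℝ) (r : ℕ) : Prop :=
  ∀ K : Set (Ed d), IsCompact K → ∀ lb : ℝ, 1 ≤ lb → ∃ C, CohB F a g r K lb C

/-- Weak homogeneity bound with constant `C` (test functions annihilating polynomials
at small scales, plus a scale-one bound on all of `𝓑^r`). -/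
def WHomB (F : GermF d) (a : ℝ) (r : ℕ) (K : Set (Ed d)) (lb C : ℝ) : Prop :=
  (∀ x ∈ K, ∀ l : ℝ, 0 < l → l ≤ lb → ∀ φ ∈ TBAnn d r a,
      |F x (scTF φ x l)| ≤ C * l ^ a) ∧
  (∀ x ∈ K, ∀ ψ ∈ TB d r, |F x (scTF ψ x 1)| ≤ C)

/-- Weak coherence bound with constant `C`. -/
def WCohB (F : GermF d) (a g : ℝ) (r : ℕ) (K : Set (Ed d)) (lb C : ℝ) : Prop :=
  (∀ x ∈ K, ∀ y ∈ K, ∀ l : ℝ, 0 < l → l ≤ lb → ∀ φ ∈ TBAnn d r g,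
      |F y (scTF φ x l) - F x (scTF φ x l)| ≤ C * l ^ a * (dist y x + l) ^ (g - a)) ∧
  (∀ x ∈ K, ∀ y ∈ K, ∀ ψ ∈ TB d r, |F y (scTF ψ x 1) - F x (scTF ψ x 1)| ≤ C)

/-- `F` is weakly `ᾱ`-homogeneous of order `r`. -/
def WHomog (F : GermF d) (a : ℝ) (r : ℕ) : Prop :=
  ∀ K : Set (Ed d), IsCompact K → ∀ lb : ℝ, 1 ≤ lb → ∃ C, WHomB F a r K lb C

/-- `F` is weakly `(α,γ)`-coherent of order `r`. -/
def WCoh (F : GermF d) (a g : ℝ) (r : ℕ) : Prop :=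
  ∀ K : Set (Ed d), IsCompact K → ∀ lb : ℝ, 1 ≤ lb → ∃ C, WCohB F a g r K lb C

/-- The canonical order `r_{ᾱ,α} = min{n ∈ ℕ₀ : n > max(-ᾱ, -α)}`. -/
def rJ (a b : ℝ) : ℕ := (⌊max (-a) (-b)⌋ + 1).toNat

/-- Joint homogeneity-and-coherence bound at the canonical order. -/
def JointB (F : GermF d) (ab a g : ℝ) (K : Set (Ed d)) (lb C : ℝ) : Prop :=
  HomB F ab (rJ ab a) K lb C ∧ CohB F a g (rJ ab a) K lb C

/-- Joint weak homogeneity-and-coherence bound at the canonical order. -/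
def WJointB (F : GermF d) (ab a g : ℝ) (K : Set (Ed d)) (lb C : ℝ) : Prop :=
  WHomB F ab (rJ ab a) K lb C ∧ WCohB F a g (rJ ab a) K lb C

/-- `R` is a `γ`-reconstruction of the `(α,γ)`-coherent germ `F`. -/
def IsRec (F : GermF d) (R : DFunc d) (a g : ℝ) : Prop :=
  ∀ r : ℕ, -a < (r : ℝ) → ∀ K : Set (Ed d), IsCompact K → ∃ C : ℝ,
    ∀ x ∈ K, ∀ l : ℝ, 0 < l → l ≤ 1 → ∀ φ ∈ TB d r,
      |F x (scTF φ x l) - R (scTF φ x l)| ≤ C * l ^ g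

/-- Mixed partial derivative `∂_1^k ∂_2^l K(x,y)` of a kernel. -/
def mixDeriv (k l : MIdx d) (Kf : Ed d → Ed d → ℝ) (x y : Ed d) : ℝ :=
  mderiv k (fun x' => mderiv l (fun y' => Kf x' y') y) x

/-- The kernel `K(x,y)` is of class `C^{m,r}` (mixed partials `∂_1^k ∂_2^l`, `|k| ≤ m`,
`|l| ≤ r`, exist and are continuous). -/
def IsCmr (m r : ℕ) (Kf : Ed d → Ed d → ℝ) : Prop :=
  ∀ k l : MIdx d, mdeg k ≤ m → mdeg l ≤ r →
    Continuous (fun p : Ed d × Ed d => mixDeriv k l Kf p.1 p.2) ∧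
    (mdeg k < m → ∀ (i : Fin d) (x y : Ed d),
      LineDifferentiableAt ℝ (fun x' => mixDeriv k l Kf x' y) x
        (EuclideanSpace.single i (1:ℝ))) ∧
    (mdeg l < r → ∀ (j : Fin d) (x y : Ed d),
      LineDifferentiableAt ℝ (mderiv l (fun y' => Kf x y')) y
        (EuclideanSpace.single j (1:ℝ)))

/-- `Kn` is the dyadic decomposition of a `β`-regularising kernel of order `(m,r)`
with range `ρ` (Definition 2.3 of the paper). -/
def RegKer (d : ℕ) (β : ℝ) (m r : ℕ) (ρ : ℝ) (Kn : ℕ → Ed d → Ed d → ℝ) : Prop :=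
  (∀ n, IsCmr m r (Kn n)) ∧
  (∀ n x y, Kn n x y ≠ 0 → dist x y ≤ ρ * 2 ^ (-(n : ℝ))) ∧
  (∀ K : Set (Ed d), IsCompact K → ∃ c : ℝ, 0 < c ∧
    (∀ n, ∀ k l : MIdx d, mdeg k ≤ m → mdeg l ≤ r → ∀ x ∈ K, ∀ y ∈ K,
      |mixDeriv k l (Kn n) x y| ≤
        c * 2 ^ ((((d : ℝ) - β + (mdeg l : ℝ) + (mdeg k : ℝ))) * n)) ∧
    (∀ n, ∀ k l : MIdx d, mdeg k ≤ r → mdeg l ≤ r → ∀ y ∈ K,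
      |∫ x, mpow (y - x) l * mderiv k (fun y' => Kn n x y') y| ≤ c * 2 ^ (-(β * (n : ℝ)))))

/-- `K_n^* ψ (y) = ∫ ψ(x) K_n(x,y) dx`. -/
def kstar (Kf : Ed d → Ed d → ℝ) (ψ : Ed d → ℝ) : Ed d → ℝ :=
  fun y => ∫ x, ψ x * Kf x y

/-- `g = 𝖪 f`, i.e. `g(ψ) = Σ_n f(K_n^* ψ)` (with convergence) on test functions. -/
def KInt (Kn : ℕ → Ed d → Ed d → ℝ) (f g : DFunc d) : Prop :=
  ∀ ψ : Ed d → ℝ, IsTest ψ → HasSum (fun n => f (kstar (Kn n) ψ)) (g ψ)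

/-- The kernel decomposition preserves polynomials at level `γ`. -/
def PresPoly (Kn : ℕ → Ed d → Ed d → ℝ) (γ : ℝ) : Prop :=
  ∀ n, ∀ k : MIdx d, (mdeg k : ℝ) ≤ γ →
    ∃ p : MvPolynomial (Fin d) ℝ, p.totalDegree ≤ mdeg k ∧
      ∀ x : Ed d, (∫ y, Kn n x y * mpow y k) = MvPolynomial.eval (fun i => x i) p

/-- Distributional derivative `D^k f (φ) = (-1)^{|k|} f(∂^k φ)`. -/
def distDeriv (k : MIdx d) (f : DFunc d) : DFunc d :=
  fun φ => (-1 : ℝ) ^ (mdeg k) * f (mderiv k φ)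

/-- `η ∈ 𝒟` with `∫ η = 1` and vanishing moments of orders `1 ≤ |l| < δ`. -/
def GoodEta (δ : ℝ) (η : Ed d → ℝ) : Prop :=
  IsTest η ∧ (∫ z, η z) = 1 ∧
    ∀ k : MIdx d, 1 ≤ mdeg k → (mdeg k : ℝ) < δ → (∫ z, η z * mpow z k) = 0

/-- `v` is the pointwise derivative `D^k f(x)`, defined through the limit
`lim_{λ↓0} D^k f(η_x^λ)` for every admissible mollifier `η`. -/
def HasPtDeriv (f : DFunc d) (δ : ℝ) (k : MIdx d) (x : Ed d) (v : ℝ) : Prop :=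
  ∀ η : Ed d → ℝ, GoodEta δ η →
    Tendsto (fun l : ℝ => distDeriv k f (scTF η x l)) (nhdsWithin 0 (Set.Ioi 0)) (nhds v)

/-- The Taylor polynomial `Σ_{|k| < δ} c_k (·-x)^k / k!`, viewed as the functional
`ψ ↦ Σ_{|k| < δ} c_k ∫ ψ(y) (y-x)^k / k! dy`. -/
def taylorF (δ : ℝ) (c : MIdx d → ℝ) (x : Ed d) : DFunc d :=
  fun ψ => ∑ᶠ k ∈ {k : MIdx d | (mdeg k : ℝ) < δ},
    c k * ((∫ y, ψ y * mpow (y - x) k) / (mfact k))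

/-- The smallest positive integer `> -γ` (used in Hölder–Zygmund spaces for `γ < 0`). -/
def rNeg (γ : ℝ) : ℕ := (⌊-γ + 1⌋).toNat

/-- The Hölder–Zygmund bound with constant `C` on the compact `K` (with `λ̄ = 1`). -/
def ZBound (γ : ℝ) (f : DFunc d) (K : Set (Ed d)) (C : ℝ) : Prop :=
  (γ < 0 → ∀ x ∈ K, ∀ l : ℝ, 0 < l → l ≤ 1 → ∀ φ ∈ TB d (rNeg γ),
    |f (scTF φ x l)| ≤ C * l ^ γ) ∧
  (0 ≤ γ →
    (∀ x ∈ K, ∀ ψ ∈ TB d 0, |f (scTF ψ x 1)| ≤ C) ∧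
    (∀ x ∈ K, ∀ l : ℝ, 0 < l → l ≤ 1 → ∀ φ ∈ TBAnn d 0 γ,
      |f (scTF φ x l)| ≤ C * l ^ γ))

/-- Membership in the local Hölder–Zygmund space `𝒵^γ`. -/
def MemZ (γ : ℝ) (f : DFunc d) : Prop :=
  IsDistribution f ∧ ∀ K : Set (Ed d), IsCompact K → ∃ C, ZBound γ f K C

/-- `(Pg, Gg)` is a model with homogeneities `α` of order `rP`, with index set `S`. -/
def IsModelOn {ι : Type} (S : Finset ι) (Pg : ι → GermF d)
    (Gg : ι → ι → Ed d → Ed d → ℝ) (α : ι → ℝ) (rP : ℕ) : Prop :=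
  (∀ i ∈ S, IsGerm (Pg i)) ∧
  (∀ i ∈ S, Homog (Pg i) (α i) rP) ∧
  (∀ i ∈ S, ∀ x y : Ed d, ∀ φ : Ed d → ℝ, IsTest φ →
    Pg i y φ = ∑ j ∈ S, Pg j x φ * Gg j i x y)

/-- The modelled-distribution bound with constant `C` on the compact `K`. -/
def MDB {ι : Type} (S : Finset ι) (Gg : ι → ι → Ed d → Ed d → ℝ) (α : ι → ℝ)
    (γ : ℝ) (f : Ed d → ι → ℝ) (K : Set (Ed d)) (C : ℝ) : Prop :=
  (∀ x ∈ K, ∀ i ∈ S, |f x i| ≤ C) ∧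
  (∀ x ∈ K, ∀ y ∈ K, ∀ i ∈ S,
    |(∑ j ∈ S, Gg i j x y * f y j) - f x i| ≤ C * (dist y x) ^ (γ - α i))

/-- `f` is a modelled distribution of order `γ` relative to the model data. -/
def IsMD {ι : Type} (S : Finset ι) (Gg : ι → ι → Ed d → Ed d → ℝ) (α : ι → ℝ)
    (γ : ℝ) (f : Ed d → ι → ℝ) : Prop :=
  (∀ i ∈ S, Measurable fun x : Ed d => f x i) ∧
  ∀ K : Set (Ed d), IsCompact K → ∃ C, MDB S Gg α γ f K C

/-- The germ `⟨f, Π⟩_x = Σ_i f^i(x) Π^i_x`. -/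
def germOf {ι : Type} (S : Finset ι) (Pg : ι → GermF d) (f : Ed d → ι → ℝ) : GermF d :=
  fun x φ => ∑ i ∈ S, f x i * Pg i x φ

/-!
Differentiating under the integral, `∂^k (K_n^* ψ)(y) = ∫ ψ(x) ∂_2^k K_n(x, y) dx` for
`|k| ≤ r`. The kernel is carried by the ball of radius `ρ_n = ρ 2^{-n}` around `y`, where
`|∂_2^k K_n| ≲ 2^{(d-β+|k|)n}`. Replacing `ψ` by its Taylor polynomial at `y` costs
`O(ρ_n^r ‖ψ‖_{C^r})` pointwise, hence `O(2^{-βn} ‖ψ‖_{C^r})` after integration, and the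
polynomial itself pairs with `∂_2^k K_n` through the moments, which are `O(2^{-βn})`. So
`‖K_n^* ψ‖_{C^r} ≲ 2^{-βn} ‖ψ‖_{C^r}` locally uniformly, while `K_n^* ψ` stays supported in the
`ρ`-neighbourhood of `supp ψ`. Applying `f` of order `r`, the series `Σ_n f(K_n^* ψ)` is
dominated by a geometric series times `‖ψ‖_{C^r}`, so it converges and its sum is linear and
of order `r`. If the kernel is of order `(0, r)` for all `r`, each `K_n^* ψ` is smooth, and the
same argument applies with the order of `f` on a neighbourhood of `supp ψ`.
-/

section MultiIndex

abbrev unitVec (i : Fin d) : Ed d := EuclideanSpace.single i (1:ℝ)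

def madd (k : MIdx d) (i : Fin d) : MIdx d := Function.update k i (k i + 1)

lemma mdeg_madd (k : MIdx d) (i : Fin d) : mdeg (madd k i) = mdeg k + 1 := by
  simp only [mdeg, madd, Finset.sum_update_of_mem (Finset.mem_univ i),
    ← Finset.add_sum_erase Finset.univ k (Finset.mem_univ i), Finset.sdiff_singleton_eq_erase]
  omega

lemma mdeg_zero : mdeg (0 : MIdx d) = 0 := by
  simp [mdeg]

lemma mdeg_eq_zero_iff {k : MIdx d} : mdeg k = 0 ↔ k = 0 := by
  simp [mdeg, funext_iff]

lemma madd_comm (k : MIdx d) {i j : Fin d} (hij : i ≠ j) :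
    madd (madd k i) j = madd (madd k j) i := by
  simp only [madd, Function.update_of_ne hij.symm, Function.update_of_ne hij,
    Function.update_comm hij.symm]

lemma exists_eq_madd {k : MIdx d} {N : ℕ} (hk : mdeg k = N + 1) :
    ∃ (κ : MIdx d) (i : Fin d), (∀ j < i, κ j = 0) ∧ mdeg κ = N ∧ k = madd κ i := by
  have hne : (Finset.univ.filter fun j => k j ≠ 0).Nonempty := by
    by_contra h
    simp only [Finset.not_nonempty_iff_eq_empty, Finset.filter_eq_empty_iff, Finset.mem_univ,
      not_not, true_implies] at h
    simp [mdeg, h] at hk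
  set i := (Finset.univ.filter fun j => k j ≠ 0).min' hne
  have hki : k i ≠ 0 := by simpa using Finset.min'_mem _ hne
  have hbelow : ∀ j < i, k j = 0 := fun j hj => by
    by_contra h
    exact absurd (Finset.min'_le _ j (by simpa using h)) (not_le.2 hj)
  have hk_eq : k = madd (Function.update k i (k i - 1)) i := by
    simp only [madd, Function.update_idem, Function.update_self, Nat.sub_add_cancel
      (Nat.pos_of_ne_zero hki), Function.update_eq_self]
  refine ⟨Function.update k i (k i - 1), i, fun j hj => ?_, ?_, hk_eq⟩
  · rw [Function.update_of_ne hj.ne]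
    exact hbelow j hj
  · have := mdeg_madd (Function.update k i (k i - 1)) i
    rw [← hk_eq] at this
    omega

end MultiIndex

section PartialDerivatives

private lemma foldr_pd_congr {k l : MIdx d} {L : List (Fin d)} (h : ∀ i ∈ L, k i = l i)
    (f : Ed d → ℝ) :
    L.foldr (fun i g => (pd i)^[k i] g) f = L.foldr (fun i g => (pd i)^[l i] g) f := by
  induction L with
  | nil => rfl
  | cons a L ih =>
      simp only [List.foldr_cons, ih fun i hi => h i (List.mem_cons_of_mem _ hi),
        h a List.mem_cons_self]

private lemma foldr_pd_zero (L : List (Fin d)) (f : Ed d → ℝ) :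
    L.foldr (fun i g => (pd i)^[(0 : MIdx d) i] g) f = f := by
  simp

lemma mderiv_zero (f : Ed d → ℝ) : mderiv 0 f = f :=
  foldr_pd_zero _ f

private lemma mderiv_eq_foldr_drop (k : MIdx d) (i : ℕ) (h : ∀ j : Fin d, (j:ℕ) < i → k j = 0)
    (f : Ed d → ℝ) :
    mderiv k f = ((List.finRange d).drop i).foldr (fun j g => (pd j)^[k j] g) f := by
  have htake : ∀ j ∈ (List.finRange d).take i, k j = (0 : MIdx d) j := fun j hj => by
    obtain ⟨n, hn, rfl⟩ := List.mem_iff_getElem.1 hj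
    simp only [List.length_take, List.length_finRange, lt_min_iff] at hn
    exact h _ (by simpa using hn.1)
  conv_lhs => rw [mderiv, ← List.take_append_drop i (List.finRange d), List.foldr_append,
    foldr_pd_congr htake, foldr_pd_zero]

/-- No regularity is needed here: `mderiv` applies the coordinate partials in increasing
order of the coordinates, the outermost first. -/
lemma pd_mderiv_of_lt (l : MIdx d) (i : Fin d) (h : ∀ j < i, l j = 0) (f : Ed d → ℝ) :
    pd i (mderiv l f) = mderiv (madd l i) f := by
  have hdrop : (List.finRange d).drop i = i :: (List.finRange d).drop (i + 1) := by
    rw [List.drop_eq_getElem_cons (by simp), List.getElem_finRange]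
    rfl
  have hagree : ∀ j ∈ (List.finRange d).drop (i + 1), madd l i j = l j := fun j hj => by
    obtain ⟨n, hn, rfl⟩ := List.mem_iff_getElem.1 hj
    simp only [List.getElem_drop, List.getElem_finRange]
    exact Function.update_of_ne (fun e => by simp [Fin.ext_iff] at e; omega) _ _
  have hmadd : ∀ j : Fin d, (j:ℕ) < i → madd l i j = 0 := fun j hj => by
    rw [madd, Function.update_of_ne (Fin.ne_of_lt hj)]
    exact h j hj
  rw [mderiv_eq_foldr_drop l i h, mderiv_eq_foldr_drop _ i hmadd, hdrop]
  rw [List.foldr_cons, List.foldr_cons, foldr_pd_congr hagree]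
  simp only [madd, Function.update_self, Function.iterate_succ_apply']

lemma pd_eqOn {U : Set (Ed d)} (hU : IsOpen U) {f g : Ed d → ℝ} (h : Set.EqOn f g U)
    (i : Fin d) : Set.EqOn (pd i f) (pd i g) U := fun _ hy =>
  (Filter.eventuallyEq_of_mem (hU.mem_nhds hy) h).lineDeriv_eq

lemma mderiv_eqOn {U : Set (Ed d)} (hU : IsOpen U) {f g : Ed d → ℝ} (h : Set.EqOn f g U)
    (k : MIdx d) : Set.EqOn (mderiv k f) (mderiv k g) U := by
  unfold mderiv
  induction List.finRange d generalizing f g with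
  | nil => exact h
  | cons a L ih =>
      simp only [List.foldr_cons]
      induction k a with
      | zero => exact ih h
      | succ n ihn => simpa only [Function.iterate_succ_apply'] using pd_eqOn hU ihn a

lemma mderiv_const_zero (k : MIdx d) : mderiv k (0 : Ed d → ℝ) = 0 := by
  unfold mderiv
  induction List.finRange d with
  | nil => rfl
  | cons a L ih =>
      simp only [List.foldr_cons, ih]
      induction k a with
      | zero => rfl
      | succ n ihn =>
          rw [Function.iterate_succ_apply', ihn]
          funext y
          simp [pd, lineDeriv]

lemma mderiv_eq_zero_of_eqOn_zero {U : Set (Ed d)} (hU : IsOpen U) {f : Ed d → ℝ}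
    (h : Set.EqOn f 0 U) (k : MIdx d) {y : Ed d} (hy : y ∈ U) : mderiv k f y = 0 := by
  simpa [mderiv_const_zero] using mderiv_eqOn hU h k hy

lemma support_mderiv_subset (k : MIdx d) (φ : Ed d → ℝ) :
    Function.support (mderiv k φ) ⊆ tsupport φ := fun _ hz => by
  by_contra hzn
  exact hz (mderiv_eq_zero_of_eqOn_zero (isClosed_tsupport φ).isOpen_compl
    (fun _ hw => image_eq_zero_of_notMem_tsupport hw) k hzn)

lemma HasCompactSupport.mderiv {φ : Ed d → ℝ} (hφ : HasCompactSupport φ) (k : MIdx d) :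
    HasCompactSupport (mderiv k φ) :=
  HasCompactSupport.of_support_subset_isCompact hφ (support_mderiv_subset k φ)

end PartialDerivatives

section Clairaut

lemma hasDerivAt_line_of_hasLineDerivAt {g : Ed d → ℝ} {A : ℝ} {z v : Ed d} {t : ℝ}
    (hg : HasLineDerivAt ℝ g A (z + t • v) v) :
    HasDerivAt (fun s : ℝ => g (z + s • v)) A t := by
  have h0 : HasDerivAt (fun s : ℝ => g (z + t • v + s • v)) A 0 := hg
  have hshift := HasDerivAt.comp_sub_const t t (by rwa [sub_self])
  refine hshift.congr_of_eventuallyEq (Filter.Eventually.of_forall fun s => ?_)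
  simp only [sub_smul, add_add_sub_cancel]

lemma abs_sub_sub_mul_le {φ φ' : ℝ → ℝ} {c ε δ s : ℝ}
    (hφ : ∀ σ, |σ| ≤ δ → HasDerivAt φ (φ' σ) σ) (hφ' : ∀ σ, |σ| ≤ δ → |φ' σ - c| ≤ ε)
    (hs : |s| ≤ δ) : |φ s - φ 0 - s * c| ≤ ε * |s| := by
  have hball : ∀ σ, σ ∈ closedBall (0:ℝ) δ ↔ |σ| ≤ δ := by simp
  have := Convex.norm_image_sub_le_of_norm_hasDerivWithin_le
    (f := fun σ => φ σ - σ * c) (f' := fun σ => φ' σ - c) (s := closedBall (0:ℝ) δ)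
    (fun σ hσ => ((hφ σ ((hball σ).1 hσ)).sub (hasDerivAt_mul_const c)).hasDerivWithinAt)
    (fun σ hσ => hφ' σ ((hball σ).1 hσ)) (convex_closedBall 0 δ)
    ((hball 0).2 (by simpa using (abs_nonneg s).trans hs)) ((hball s).2 hs)
  simpa [Real.norm_eq_abs, sub_sub_sub_comm, sub_right_comm] using this

lemma dist_add_smul_unitVec_le (p : Ed d) (i j : Fin d) (s t : ℝ) :
    dist (p + s • unitVec i + t • unitVec j) p ≤ |s| + |t| := by
  rw [dist_eq_norm, add_assoc, add_sub_cancel_left]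
  refine (norm_add_le _ _).trans_eq ?_
  simp [norm_smul]

/-- Two applications of the mean value inequality: along `e_a` for `∂_b u`, then along `e_b`. -/
lemma abs_mixed_difference_le {u : Ed d → ℝ} {a b : Fin d} {p : Ed d} {ε δ : ℝ}
    (hb : ∀ z, LineDifferentiableAt ℝ u z (unitVec b))
    (hab : ∀ z, LineDifferentiableAt ℝ (pd b u) z (unitVec a))
    (hε : ∀ z ∈ closedBall p (2 * δ), |pd a (pd b u) z - pd a (pd b u) p| ≤ ε)
    {s t : ℝ} (hs : |s| ≤ δ) (ht : |t| ≤ δ) :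
    |u (p + s • unitVec a + t • unitVec b) - u (p + t • unitVec b) - u (p + s • unitVec a)
      + u p - s * t * pd a (pd b u) p| ≤ ε * |s| * |t| := by
  have hline : ∀ (f : Ed d → ℝ) (i : Fin d) (z : Ed d) (σ : ℝ),
      LineDifferentiableAt ℝ f (z + σ • unitVec i) (unitVec i) →
      HasDerivAt (fun σ' : ℝ => f (z + σ' • unitVec i)) (pd i f (z + σ • unitVec i)) σ :=
    fun f i z σ h => hasDerivAt_line_of_hasLineDerivAt h.hasLineDerivAt
  have hinner : ∀ τ, |τ| ≤ δ → |pd b u (p + s • unitVec a + τ • unitVec b)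
      - pd b u (p + τ • unitVec b) - s * pd a (pd b u) p| ≤ ε * |s| := by
    intro τ hτ
    have := abs_sub_sub_mul_le (φ := fun σ => pd b u (p + τ • unitVec b + σ • unitVec a))
      (fun σ _ => hline _ a _ σ (hab _))
      (fun σ hσ => hε _ (mem_closedBall.2 ((dist_add_smul_unitVec_le p b a τ σ).trans
        (by linarith)))) hs
    simpa only [zero_smul, add_zero, add_right_comm p] using this
  have := abs_sub_sub_mul_le
    (φ := fun τ => u (p + s • unitVec a + τ • unitVec b) - u (p + τ • unitVec b))
    (fun τ _ => (hline _ b _ τ (hb _)).sub (hline _ b _ τ (hb _))) hinner ht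
  simp only [zero_smul, add_zero] at this
  convert this using 2
  ring

lemma pd_pd_comm {u : Ed d → ℝ} {a b : Fin d}
    (ha : ∀ z, LineDifferentiableAt ℝ u z (unitVec a))
    (hb : ∀ z, LineDifferentiableAt ℝ u z (unitVec b))
    (hab : ∀ z, LineDifferentiableAt ℝ (pd b u) z (unitVec a))
    (hcont : Continuous (pd a (pd b u))) :
    pd b (pd a u) = pd a (pd b u) := by
  funext p
  set c := pd a (pd b u) p
  suffices HasLineDerivAt ℝ (pd a u) c p (unitVec b) from this.lineDeriv
  rw [HasLineDerivAt, hasDerivAt_iff_isLittleO, Asymptotics.isLittleO_iff]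
  intro ε hε
  obtain ⟨δ, hδ, hδε⟩ : ∃ δ > 0, ∀ z ∈ closedBall p (2 * δ), |pd a (pd b u) z - c| ≤ ε := by
    obtain ⟨δ, hδ, h⟩ := Metric.continuousAt_iff.1 hcont.continuousAt ε hε
    exact ⟨δ / 4, by positivity, fun z hz =>
      (h ((mem_closedBall.1 hz).trans_lt (by linarith))).le⟩
  filter_upwards [Metric.closedBall_mem_nhds (0:ℝ) hδ] with t ht
  rw [mem_closedBall, dist_zero_right, Real.norm_eq_abs] at ht
  -- The mixed difference, as a function of `s`, is `ε |t|`-Lipschitz at `0`; this bounds its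
  -- derivative there, which is the difference quotient of `∂_a u` along `e_b`.
  have hderiv : HasDerivAt (fun s : ℝ => u (p + s • unitVec a + t • unitVec b)
      - u (p + t • unitVec b) - u (p + s • unitVec a) + u p - s * t * c)
      (pd a u (p + t • unitVec b) - pd a u p - t * c) 0 := by
    have h1 := hasDerivAt_line_of_hasLineDerivAt (t := 0)
      (by simpa using (ha (p + t • unitVec b)).hasLineDerivAt)
    have h2 := hasDerivAt_line_of_hasLineDerivAt (t := 0) (by simpa using (ha p).hasLineDerivAt)
    have := ((((h1.sub_const (u (p + t • unitVec b))).sub h2).add_const (u p)).sub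
      ((hasDerivAt_id (0:ℝ)).mul_const (t * c)))
    refine (this.congr_deriv ?_).congr_of_eventuallyEq (Filter.Eventually.of_forall fun s => ?_)
    · simp only [pd]
      ring
    · simp only [Pi.sub_apply, id, add_right_comm p]
      ring
  have hlip := hderiv.le_of_lip' (C := ε * |t|) (by positivity) <| by
    filter_upwards [Metric.closedBall_mem_nhds (0:ℝ) hδ] with s hs
    rw [mem_closedBall, dist_zero_right, Real.norm_eq_abs] at hs
    simpa [Real.norm_eq_abs, mul_right_comm ε] using
      abs_mixed_difference_le hb hab hδε hs ht
  simpa [Real.norm_eq_abs, mul_comm] using hlip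

end Clairaut

lemma IsCr.pd_mderiv {r : ℕ} {h : Ed d → ℝ} (hcr : IsCr r h) {k : MIdx d}
    (hk : mdeg k < r) (j : Fin d) : pd j (mderiv k h) = mderiv (madd k j) h := by
  induction hN : mdeg k generalizing k with
  | zero =>
      rw [mdeg_eq_zero_iff] at hN
      exact pd_mderiv_of_lt k j (by simp [hN]) h
  | succ N ih =>
      by_cases hvan : ∀ j' < j, k j' = 0
      · exact pd_mderiv_of_lt k j hvan h
      -- `k = κ + e_i` with `i` the first nonzero coordinate of `k`; then `i < j`, and `∂_j`
      -- is moved past `∂_i` by `pd_pd_comm`.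
      obtain ⟨κ, i, hκ0, hκdeg, rfl⟩ := exists_eq_madd hN
      have hij : i < j := by
        push Not at hvan
        obtain ⟨j', hj'j, hj'⟩ := hvan
        refine lt_of_le_of_lt (not_lt.1 fun hj'i => hj' ?_) hj'j
        rw [madd, Function.update_of_ne hj'i.ne]
        exact hκ0 j' hj'i
      have hdeg := mdeg_madd κ j
      have hswap : pd j (pd i (mderiv κ h)) = pd i (pd j (mderiv κ h)) := by
        refine pd_pd_comm (fun z => (hcr κ (by omega)).2 (by omega) i z)
          (fun z => (hcr κ (by omega)).2 (by omega) j z) (fun z => ?_) ?_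
        · rw [ih (by omega) hκdeg]
          exact (hcr _ (by omega)).2 (by omega) i z
        · rw [ih (by omega) hκdeg, pd_mderiv_of_lt _ i (fun j' hj' => by
            rw [madd, Function.update_of_ne (hj'.trans hij).ne]; exact hκ0 j' hj')]
          exact (hcr _ (by rw [mdeg_madd]; omega)).1
      rw [← pd_mderiv_of_lt κ i hκ0, hswap, ih (by omega) hκdeg,
        pd_mderiv_of_lt _ i (fun j' hj' => by
          rw [madd, Function.update_of_ne (hj'.trans hij).ne]; exact hκ0 j' hj'),
        madd_comm κ hij.ne]

section SmoothFunctions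

lemma pd_eq_fderiv {g : Ed d → ℝ} (hg : Differentiable ℝ g) (i : Fin d) :
    pd i g = fun z => fderiv ℝ g z (unitVec i) :=
  funext fun z => (hg z).lineDeriv_eq_fderiv

lemma ContDiff.pd {g : Ed d → ℝ} (hg : ContDiff ℝ (⊤ : ℕ∞) g) (i : Fin d) :
    ContDiff ℝ (⊤ : ℕ∞) (pd i g) := by
  rw [pd_eq_fderiv (hg.differentiable (by simp))]
  exact (hg.fderiv_right (by exact_mod_cast le_top)).clm_apply contDiff_const

lemma ContDiff.mderiv {g : Ed d → ℝ} (hg : ContDiff ℝ (⊤ : ℕ∞) g) (k : MIdx d) :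
    ContDiff ℝ (⊤ : ℕ∞) (mderiv k g) := by
  unfold _root_.mderiv
  induction List.finRange d with
  | nil => exact hg
  | cons a L ih =>
      simp only [List.foldr_cons]
      induction k a with
      | zero => exact ih
      | succ n ihn => simpa only [Function.iterate_succ_apply'] using ihn.pd a

lemma ContDiff.isCr {g : Ed d → ℝ} (hg : ContDiff ℝ (⊤ : ℕ∞) g) (r : ℕ) : IsCr r g :=
  fun k _ => ⟨(hg.mderiv k).continuous, fun _ i x =>
    ((hg.mderiv k).differentiable (by simp) x).lineDifferentiableAt⟩

end SmoothFunctions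

section Monomials

/-- The `N`-th derivative of `t ↦ ψ(y + t v)` is a sum over the `d^N` words `m : Fin N → Fin d`
of `v^{mcount m} ∂^{mcount m} ψ`; indexing by words avoids multinomial coefficients. -/
def mcount {N : ℕ} (m : Fin N → Fin d) : MIdx d :=
  fun i => (Finset.univ.filter fun s => m s = i).card

lemma mdeg_mcount {N : ℕ} (m : Fin N → Fin d) : mdeg (mcount m) = N := by
  simp only [mdeg, mcount]
  rw [← Finset.card_eq_sum_card_fiberwise fun x _ => Finset.mem_univ (m x)]
  simp

lemma mcount_cons {N : ℕ} (i : Fin d) (m : Fin N → Fin d) :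
    mcount (Fin.cons i m) = madd (mcount m) i := by
  funext a
  simp only [mcount, madd, Function.update_apply, Finset.card_filter, Fin.sum_univ_succ,
    Fin.cons_zero, Fin.cons_succ]
  by_cases ha : a = i
  · subst ha; simp [add_comm]
  · simp [ha, Ne.symm ha]

lemma mcount_zero (m : Fin 0 → Fin d) : mcount m = 0 := by
  funext i
  simp [mcount]

lemma mpow_zero (v : Ed d) : mpow v 0 = 1 := by
  simp [mpow]

lemma mpow_madd (v : Ed d) (l : MIdx d) (i : Fin d) :
    mpow v (madd l i) = v i * mpow v l := by
  simp only [mpow, madd]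
  rw [← Finset.mul_prod_erase _ _ (Finset.mem_univ i),
    ← Finset.mul_prod_erase _ (fun j => v j ^ l j) (Finset.mem_univ i),
    Finset.prod_congr rfl fun j hj => by rw [Function.update_of_ne (Finset.ne_of_mem_erase hj)],
    Function.update_self, pow_succ]
  ring

lemma mpow_mcount {N : ℕ} (v : Ed d) (m : Fin N → Fin d) :
    mpow v (mcount m) = ∏ s, v (m s) := by
  rw [mpow, ← Finset.prod_fiberwise_of_maps_to fun x _ => Finset.mem_univ (m x)]
  refine Finset.prod_congr rfl fun i _ => ?_
  rw [Finset.prod_congr rfl fun s hs => by rw [(Finset.mem_filter.1 hs).2], Finset.prod_const,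
    mcount]

lemma abs_apply_le_norm (v : Ed d) (i : Fin d) : |v i| ≤ ‖v‖ := by
  simpa using PiLp.norm_apply_le v i

lemma abs_mpow_mcount_le {N : ℕ} (v : Ed d) (m : Fin N → Fin d) :
    |mpow v (mcount m)| ≤ ‖v‖ ^ N := by
  rw [mpow_mcount, Finset.abs_prod]
  simpa using Finset.prod_le_prod (s := Finset.univ) (fun s _ => abs_nonneg _)
    fun s _ => abs_apply_le_norm v (m s)

lemma mpow_sub_comm (x y : Ed d) (l : MIdx d) :
    mpow (x - y) l = (-1 : ℝ) ^ mdeg l * mpow (y - x) l := by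
  simp only [mpow, mdeg, ← Finset.prod_pow_eq_pow_sum, ← Finset.prod_mul_distrib, ← mul_pow,
    PiLp.sub_apply, neg_one_mul, neg_sub]

lemma continuous_mpow_sub (y : Ed d) (l : MIdx d) :
    Continuous fun x : Ed d => mpow (x - y) l :=
  continuous_finsetProd _ fun i _ =>
    (((EuclideanSpace.proj i).continuous).sub continuous_const).pow _

end Monomials

section CrNorm

lemma finite_mdeg_le (r : ℕ) : Finite {k : MIdx d // mdeg k ≤ r} := by
  have hle : ∀ k : {k : MIdx d // mdeg k ≤ r}, ∀ i, k.1 i ≤ r := fun k i =>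
    (Finset.single_le_sum (fun j _ => Nat.zero_le (k.1 j)) (Finset.mem_univ i)).trans k.2
  refine Finite.of_injective (fun k i => (⟨k.1 i, Nat.lt_succ_of_le (hle k i)⟩ : Fin (r+1))) ?_
  intro k l hkl
  ext i
  simpa using congrFun hkl i

lemma crNorm_nonneg (r : ℕ) (φ : Ed d → ℝ) : 0 ≤ crNorm r φ :=
  Real.iSup_nonneg fun _ => Real.iSup_nonneg fun _ => abs_nonneg _

lemma crNorm_le {r : ℕ} {φ : Ed d → ℝ} {B : ℝ} (hB : 0 ≤ B)
    (h : ∀ k : MIdx d, mdeg k ≤ r → ∀ x, |mderiv k φ x| ≤ B) : crNorm r φ ≤ B :=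
  Real.iSup_le (fun k => Real.iSup_le (h k.1 k.2) hB) hB

lemma IsTest.abs_mderiv_le_crNorm {φ : Ed d → ℝ} (hφ : IsTest φ) {r : ℕ} {k : MIdx d}
    (hk : mdeg k ≤ r) (x : Ed d) : |mderiv k φ x| ≤ crNorm r φ := by
  have := finite_mdeg_le (d := d) r
  have hbdd : ∀ k', BddAbove (Set.range fun x => |mderiv k' φ x|) := fun k' => by
    obtain ⟨B, hB⟩ := (hφ.2.mderiv k').exists_bound_of_continuous (hφ.1.mderiv k').continuous
    exact ⟨B, by rintro _ ⟨x', rfl⟩; simpa using hB x'⟩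
  exact (le_ciSup (hbdd k) x).trans
    (le_ciSup (f := fun k' : {k' : MIdx d // mdeg k' ≤ r} => ⨆ x', |mderiv k'.1 φ x'|)
      (Set.finite_range _).bddAbove ⟨k, hk⟩)

end CrNorm

section ParametricIntegrals

variable {ψ : Ed d → ℝ} {H : Ed d → Ed d → ℝ}

lemma integrable_mul_apply (hψ : Continuous ψ) (hcs : HasCompactSupport ψ)
    (hH : Continuous (Function.uncurry H)) (y : Ed d) : Integrable fun x => ψ x * H x y :=
  (hψ.mul (hH.uncurry_right y)).integrable_of_hasCompactSupport hcs.mul_right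

lemma continuous_integral_mul (hψ : Continuous ψ) (hcs : HasCompactSupport ψ)
    (hH : Continuous (Function.uncurry H)) : Continuous fun y => ∫ x, ψ x * H x y := by
  have := continuous_parametric_integral_of_continuous (μ := volume)
    (f := fun y x => ψ x * H x y)
    ((hψ.comp continuous_snd).mul (hH.comp (continuous_snd.prodMk continuous_fst))) hcs
  refine this.congr fun y => setIntegral_eq_integral_of_forall_compl_eq_zero fun x hx => ?_
  simp [image_eq_zero_of_notMem_tsupport hx]

lemma hasLineDerivAt_integral_mul (hψ : Continuous ψ) (hcs : HasCompactSupport ψ)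
    {H' : Ed d → Ed d → ℝ} (hH : Continuous (Function.uncurry H))
    (hH' : Continuous (Function.uncurry H')) {v : Ed d}
    (hd : ∀ x z, HasLineDerivAt ℝ (H x) (H' x z) z v) (z : Ed d) :
    HasLineDerivAt ℝ (fun y => ∫ x, ψ x * H x y) (∫ x, ψ x * H' x z) z v := by
  obtain ⟨M, hM⟩ := (hcs.isCompact.prod (isCompact_closedBall z (1 + ‖v‖)))
    |>.exists_bound_of_continuousOn hH'.continuousOn
  have hmem : ∀ t ∈ ball (0:ℝ) 1, z + t • v ∈ closedBall z (1 + ‖v‖) := fun t ht => by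
    rw [mem_closedBall, dist_eq_norm, add_sub_cancel_left, norm_smul]
    have : ‖t‖ ≤ 1 := by simpa using (mem_ball_zero_iff.1 ht).le
    nlinarith [norm_nonneg v]
  have hbound : ∀ t ∈ ball (0:ℝ) 1, ∀ x, ‖ψ x * H' x (z + t • v)‖ ≤ ‖ψ x‖ * M := by
    intro t ht x
    by_cases hx : x ∈ tsupport ψ
    · rw [norm_mul]
      exact mul_le_mul_of_nonneg_left (hM (x, _) ⟨hx, hmem t ht⟩) (norm_nonneg _)
    · simp [image_eq_zero_of_notMem_tsupport hx]
  have key := hasDerivAt_integral_of_dominated_loc_of_deriv_le (x₀ := (0:ℝ))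
    (F := fun t x => ψ x * H x (z + t • v)) (F' := fun t x => ψ x * H' x (z + t • v))
    (ball_mem_nhds _ one_pos)
    (Filter.Eventually.of_forall fun t => (hψ.mul (hH.uncurry_right _)).aestronglyMeasurable)
    (integrable_mul_apply hψ hcs hH _) (hψ.mul (hH'.uncurry_right _)).aestronglyMeasurable
    (Filter.Eventually.of_forall fun x t ht => hbound t ht x)
    ((hψ.norm.mul continuous_const).integrable_of_hasCompactSupport hcs.norm.mul_right)
    (Filter.Eventually.of_forall fun x t _ =>
      (hasDerivAt_line_of_hasLineDerivAt (hd x (z + t • v))).const_mul (ψ x))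
  have hderiv := key.2
  simp only [zero_smul, add_zero] at hderiv
  exact hderiv

end ParametricIntegrals

section KernelDerivatives

variable {r : ℕ} {Kf : Ed d → Ed d → ℝ}

lemma IsCmr.continuous_mderiv (hKf : IsCmr 0 r Kf) {l : MIdx d} (hl : mdeg l ≤ r) :
    Continuous (Function.uncurry fun x y => mderiv l (Kf x) y) := by
  have h := (hKf 0 l (by simp [mdeg_zero]) hl).1
  simp only [mixDeriv, mderiv_zero] at h
  exact h

lemma IsCmr.continuous (hKf : IsCmr 0 r Kf) : Continuous (Function.uncurry Kf) := by
  simpa [mderiv_zero] using hKf.continuous_mderiv (l := 0) (by simp [mdeg_zero])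

lemma IsCmr.isCr_apply (hKf : IsCmr 0 r Kf) (x : Ed d) : IsCr r (Kf x) := fun l hl =>
  ⟨(hKf.continuous_mderiv hl).uncurry_left x,
    fun hlr j => (hKf 0 l (by simp [mdeg_zero]) hl).2.2 hlr j x⟩

def kstarDeriv (Kf : Ed d → Ed d → ℝ) (ψ : Ed d → ℝ) (k : MIdx d) : Ed d → ℝ :=
  fun y => ∫ x, ψ x * mderiv k (Kf x) y

variable {ψ : Ed d → ℝ}

lemma kstarDeriv_zero : kstarDeriv Kf ψ 0 = kstar Kf ψ := by
  funext y
  simp [kstarDeriv, kstar, mderiv_zero]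

lemma continuous_kstarDeriv (hKf : IsCmr 0 r Kf) (hψ : Continuous ψ)
    (hcs : HasCompactSupport ψ) {k : MIdx d} (hk : mdeg k ≤ r) :
    Continuous (kstarDeriv Kf ψ k) :=
  continuous_integral_mul hψ hcs (hKf.continuous_mderiv hk)

lemma hasLineDerivAt_kstarDeriv (hKf : IsCmr 0 r Kf) (hψ : Continuous ψ)
    (hcs : HasCompactSupport ψ) {k : MIdx d} (hk : mdeg k < r) (i : Fin d) (z : Ed d) :
    HasLineDerivAt ℝ (kstarDeriv Kf ψ k) (kstarDeriv Kf ψ (madd k i) z) z (unitVec i) := by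
  refine hasLineDerivAt_integral_mul hψ hcs (hKf.continuous_mderiv hk.le)
    (hKf.continuous_mderiv (by rw [mdeg_madd]; omega)) (fun x z' => ?_) z
  rw [← (hKf.isCr_apply x).pd_mderiv hk i]
  exact ((hKf.isCr_apply x k hk.le).2 hk i z').hasLineDerivAt

lemma mderiv_kstar (hKf : IsCmr 0 r Kf) (hψ : Continuous ψ) (hcs : HasCompactSupport ψ)
    {k : MIdx d} (hk : mdeg k ≤ r) : mderiv k (kstar Kf ψ) = kstarDeriv Kf ψ k := by
  induction hN : mdeg k generalizing k with
  | zero =>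
      rw [mdeg_eq_zero_iff] at hN
      rw [hN, mderiv_zero, kstarDeriv_zero]
  | succ N ih =>
      obtain ⟨κ, i, hκ0, hκdeg, rfl⟩ := exists_eq_madd hN
      funext z
      rw [← pd_mderiv_of_lt κ i hκ0, ih (by omega) hκdeg]
      exact (hasLineDerivAt_kstarDeriv hKf hψ hcs (by omega) i z).lineDeriv

lemma isCr_kstar (hKf : IsCmr 0 r Kf) (hψ : Continuous ψ) (hcs : HasCompactSupport ψ) :
    IsCr r (kstar Kf ψ) := fun k hk => by
  rw [mderiv_kstar hKf hψ hcs hk]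
  exact ⟨continuous_kstarDeriv hKf hψ hcs hk, fun hlt j z =>
    (hasLineDerivAt_kstarDeriv hKf hψ hcs hlt j z).lineDifferentiableAt⟩

end KernelDerivatives

section ContinuousPartials

lemma norm_sum_smul_unitVec_le (h : Ed d) (S : Finset (Fin d)) :
    ‖∑ i ∈ S, h i • unitVec i‖ ≤ ∑ i ∈ S, |h i| :=
  (norm_sum_le _ _).trans_eq (Finset.sum_congr rfl fun i _ => by simp [norm_smul])

lemma sum_smul_unitVec (h : Ed d) : ∑ i, h i • unitVec i = h := by
  conv_rhs => rw [← (EuclideanSpace.basisFun (Fin d) ℝ).sum_repr h]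
  simp [unitVec]

lemma abs_sub_sub_sum_partials_le {u : Ed d → ℝ} {v : Fin d → Ed d → ℝ}
    (hd : ∀ i z, HasLineDerivAt ℝ u (v i z) z (unitVec i)) {p h : Ed d} {ε : ℝ}
    (hv : ∀ i, ∀ z ∈ closedBall p (∑ i, |h i|), |v i z - v i p| ≤ ε) (S : Finset (Fin d)) :
    |u (p + ∑ i ∈ S, h i • unitVec i) - u p - ∑ i ∈ S, h i * v i p| ≤ ε * ∑ i ∈ S, |h i| := by
  induction S using Finset.induction_on with
  | empty => simp
  | @insert a S ha ih =>
      set z := p + ∑ i ∈ S, h i • unitVec i with hz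
      have hstep : |u (z + h a • unitVec a) - u z - h a * v a p| ≤ ε * |h a| := by
        refine abs_sub_sub_mul_le (φ := fun σ => u (z + σ • unitVec a))
          (fun σ _ => hasDerivAt_line_of_hasLineDerivAt (hd a _)) (fun σ hσ => hv a _ ?_)
          le_rfl |>.trans_eq' (by simp)
        rw [mem_closedBall, dist_eq_norm, show z + σ • unitVec a - p
          = ∑ i ∈ S, h i • unitVec i + σ • unitVec a by rw [hz]; abel]
        calc ‖∑ i ∈ S, h i • unitVec i + σ • unitVec a‖
            ≤ ∑ i ∈ S, |h i| + |h a| := by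
              refine (norm_add_le _ _).trans (add_le_add (norm_sum_smul_unitVec_le h S) ?_)
              simpa [norm_smul] using hσ
          _ ≤ ∑ i, |h i| := by
              rw [add_comm, ← Finset.sum_insert (f := fun i => |h i|) ha]
              exact Finset.sum_le_sum_of_subset_of_nonneg (Finset.subset_univ _)
                fun i _ _ => abs_nonneg _
      have hpt : p + ∑ i ∈ insert a S, h i • unitVec i = z + h a • unitVec a := by
        rw [Finset.sum_insert ha, hz]; abel
      rw [hpt, Finset.sum_insert ha, Finset.sum_insert ha]
      calc _ = |(u (z + h a • unitVec a) - u z - h a * v a p)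
              + (u z - u p - ∑ i ∈ S, h i * v i p)| := by ring_nf
        _ ≤ ε * |h a| + ε * ∑ i ∈ S, |h i| := (abs_add_le _ _).trans (add_le_add hstep ih)
        _ = _ := by ring

lemma hasFDerivAt_of_partials {u : Ed d → ℝ} {v : Fin d → Ed d → ℝ}
    (hv : ∀ i, Continuous (v i))
    (hd : ∀ i z, HasLineDerivAt ℝ u (v i z) z (unitVec i)) (p : Ed d) :
    HasFDerivAt u (∑ i, v i p • (EuclideanSpace.proj i : Ed d →L[ℝ] ℝ)) p := by
  rw [hasFDerivAt_iff_isLittleO_nhds_zero, Asymptotics.isLittleO_iff]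
  intro ε hε
  set ε' := ε / (d + 1)
  have hclose : ∀ᶠ z in 𝓝 p, ∀ i, |v i z - v i p| ≤ ε' := Filter.eventually_all.2 fun i =>
    ((hv i).continuousAt.eventually (closedBall_mem_nhds (v i p) (show 0 < ε' by positivity))).mono
      fun z hz => by rwa [Real.dist_eq] at hz
  obtain ⟨δ, hδ, hδclose⟩ := Metric.eventually_nhds_iff_ball.1 hclose
  filter_upwards [ball_mem_nhds (0 : Ed d) (show 0 < δ / (d + 1) by positivity)] with h hh
  rw [mem_ball_zero_iff] at hh
  have hsum : ∑ i, |h i| ≤ d * ‖h‖ := by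
    simpa using Finset.sum_le_sum fun i (_ : i ∈ Finset.univ) => abs_apply_le_norm h i
  have hkey := abs_sub_sub_sum_partials_le hd (p := p) (h := h) (ε := ε')
    (fun i z hz => hδclose z (mem_ball.2 (by
      rw [mem_closedBall] at hz
      have : (d:ℝ) * ‖h‖ < δ := by
        rw [lt_div_iff₀ (by positivity)] at hh; nlinarith [norm_nonneg h]
      linarith)) i) Finset.univ
  rw [sum_smul_unitVec] at hkey
  have hL : ∑ i, h i * v i p = (∑ i, v i p • (EuclideanSpace.proj i : Ed d →L[ℝ] ℝ)) h := by
    simp [mul_comm]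
  rw [hL] at hkey
  calc ‖u (p + h) - u p - _‖ ≤ ε' * ∑ i, |h i| := hkey
    _ ≤ ε' * (d * ‖h‖) := by gcongr
    _ ≤ ε * ‖h‖ := by
        rw [div_mul_eq_mul_div, div_le_iff₀ (by positivity)]
        nlinarith [norm_nonneg h]

lemma contDiff_of_hasLineDerivAt_madd (G : MIdx d → Ed d → ℝ) (hGc : ∀ k, Continuous (G k))
    (hGd : ∀ k i z, HasLineDerivAt ℝ (G k) (G (madd k i) z) z (unitVec i)) (k : MIdx d) :
    ContDiff ℝ (⊤ : ℕ∞) (G k) := by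
  rw [contDiff_infty]
  intro n
  induction n generalizing k with
  | zero => exact contDiff_zero.2 (hGc k)
  | succ n ih =>
      have hF : ∀ z, HasFDerivAt (G k)
          (∑ i, G (madd k i) z • (EuclideanSpace.proj i : Ed d →L[ℝ] ℝ)) z :=
        hasFDerivAt_of_partials (fun i => hGc (madd k i)) (hGd k)
      rw [show ((n + 1 : ℕ) : WithTop ℕ∞) = (n : ℕ) + 1 from rfl, contDiff_succ_iff_fderiv]
      refine ⟨fun z => (hF z).differentiableAt, by simp, ?_⟩
      rw [show fderiv ℝ (G k) = _ from funext fun z => (hF z).fderiv]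
      exact ContDiff.sum fun i _ => (ih (madd k i)).smul contDiff_const

lemma contDiff_kstar {Kf : Ed d → Ed d → ℝ} (hKf : ∀ r, IsCmr 0 r Kf) {ψ : Ed d → ℝ}
    (hψ : Continuous ψ) (hcs : HasCompactSupport ψ) :
    ContDiff ℝ (⊤ : ℕ∞) (kstar Kf ψ) := by
  rw [← kstarDeriv_zero]
  exact contDiff_of_hasLineDerivAt_madd _
    (fun k => continuous_kstarDeriv (hKf (mdeg k)) hψ hcs le_rfl)
    (fun k i z => hasLineDerivAt_kstarDeriv (hKf (mdeg k + 1)) hψ hcs (Nat.lt_succ_self _) i z) 0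

end ContinuousPartials

section Taylor

lemma factorial_inv_mul_pow_le_one (N : ℕ) {t : ℝ} (ht0 : 0 ≤ t) (ht1 : t ≤ 1) :
    (N.factorial : ℝ)⁻¹ * (N * (1 - t) ^ (N - 1)) ≤ 1 := by
  rw [inv_mul_le_one₀ (by positivity)]
  calc (N : ℝ) * (1 - t) ^ (N - 1) ≤ N * 1 := by
        gcongr
        exact pow_le_one₀ (by linarith) (by linarith)
    _ ≤ N.factorial := by rw [mul_one]; exact_mod_cast N.self_le_factorial

lemma abs_sub_taylor_sum_le (N : ℕ) (w : ℕ → ℝ → ℝ)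
    (hw : ∀ j < N, ∀ t, HasDerivAt (w j) (w (j + 1) t) t) {M : ℝ}
    (hM : ∀ t ∈ Set.Icc (0:ℝ) 1, |w N t| ≤ M) :
    |w 0 1 - ∑ j ∈ Finset.range N, (j.factorial : ℝ)⁻¹ * w j 0| ≤ M := by
  rcases N.eq_zero_or_pos with rfl | hN
  · simpa using hM 1 (by norm_num)
  -- The mean value inequality for `R`, whose derivative telescopes to `B N t`.
  set B : ℕ → ℝ → ℝ := fun j t => (j.factorial : ℝ)⁻¹ * w j t * (j * (1 - t) ^ (j - 1))
  set R : ℝ → ℝ := fun t => ∑ j ∈ Finset.range N, (j.factorial : ℝ)⁻¹ * w j t * (1 - t) ^ j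
  have hB_succ : ∀ j t, B (j + 1) t = (j.factorial : ℝ)⁻¹ * w (j + 1) t * (1 - t) ^ j :=
    fun j t => by
      simp only [B, Nat.factorial_succ, Nat.cast_mul, Nat.add_sub_cancel]
      field_simp
  have hR : ∀ t, HasDerivAt R (B N t) t := fun t => by
    have hterm : ∀ j ∈ Finset.range N, HasDerivAt
        (fun t => (j.factorial : ℝ)⁻¹ * w j t * (1 - t) ^ j) (B (j + 1) t - B j t) t :=
      fun j hj => by
        refine (((hw j (Finset.mem_range.1 hj) t).const_mul (j.factorial : ℝ)⁻¹).mul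
          (((hasDerivAt_id t).const_sub 1).pow j)).congr_deriv ?_
        rw [hB_succ]
        simp only [B, id, Pi.pow_apply]
        ring
    have := HasDerivAt.fun_sum hterm
    rwa [Finset.sum_range_sub (fun j => B j t), show B 0 t = 0 by simp [B], sub_zero] at this
  have hB : ∀ t ∈ Set.Icc (0:ℝ) 1, ‖B N t‖ ≤ M := fun t ⟨ht0, ht1⟩ => by
    have hcoef := factorial_inv_mul_pow_le_one N ht0 ht1
    calc ‖B N t‖ = (N.factorial : ℝ)⁻¹ * (N * (1 - t) ^ (N - 1)) * |w N t| := by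
          simp only [B, Real.norm_eq_abs, abs_mul, abs_inv, Nat.abs_cast,
            abs_of_nonneg (pow_nonneg (sub_nonneg.2 ht1) _)]
          ring
      _ ≤ 1 * M := mul_le_mul hcoef (hM t ⟨ht0, ht1⟩) (abs_nonneg _) zero_le_one
      _ = M := one_mul M
  have hmvt := Convex.norm_image_sub_le_of_norm_hasDerivWithin_le
    (fun t _ => (hR t).hasDerivWithinAt) hB (convex_Icc 0 1)
    (Set.left_mem_Icc.2 zero_le_one) (Set.right_mem_Icc.2 zero_le_one)
  have hR1 : R 1 = w 0 1 := by
    simp only [R]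
    rw [Finset.sum_eq_single_of_mem 0 (Finset.mem_range.2 hN) fun j _ hj => by simp [hj]]
    simp
  simpa [R, hR1, Real.norm_eq_abs] using hmvt

lemma hasDerivAt_mderiv_comp_line {ψ : Ed d → ℝ} (hψ : ContDiff ℝ (⊤ : ℕ∞) ψ)
    (l : MIdx d) (y v : Ed d) (t : ℝ) :
    HasDerivAt (fun t : ℝ => mderiv l ψ (y + t • v))
      (∑ i, v i * mderiv (madd l i) ψ (y + t • v)) t := by
  have hdiff := (hψ.mderiv l).differentiable (by simp) (y + t • v)
  refine (hdiff.hasFDerivAt.comp_hasDerivAt t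
    (((hasDerivAt_id t).smul_const v).const_add y)).congr_deriv ?_
  rw [one_smul]
  conv_lhs => arg 2; rw [← sum_smul_unitVec v]
  rw [map_sum]
  refine Finset.sum_congr rfl fun i _ => ?_
  rw [map_smul, smul_eq_mul, ← hdiff.lineDeriv_eq_fderiv,
    ← (hψ.isCr (mdeg l + 1)).pd_mderiv (Nat.lt_succ_self _) i]
  rfl

lemma hasDerivAt_sum_words {ψ : Ed d → ℝ} (hψ : ContDiff ℝ (⊤ : ℕ∞) ψ) (y v : Ed d) (j : ℕ)
    (t : ℝ) :
    HasDerivAt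
      (fun t : ℝ => ∑ m : Fin j → Fin d, mpow v (mcount m) * mderiv (mcount m) ψ (y + t • v))
      (∑ m : Fin (j + 1) → Fin d, mpow v (mcount m) * mderiv (mcount m) ψ (y + t • v)) t := by
  refine (HasDerivAt.fun_sum fun m (_ : m ∈ Finset.univ) =>
    (hasDerivAt_mderiv_comp_line hψ (mcount m) y v t).const_mul (mpow v (mcount m))).congr_deriv ?_
  rw [← (Fin.consEquiv fun _ : Fin (j + 1) => Fin d).sum_comp, Fintype.sum_prod_type,
    Finset.sum_comm]
  refine Finset.sum_congr rfl fun m _ => ?_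
  rw [Finset.mul_sum]
  refine Finset.sum_congr rfl fun i _ => ?_
  simp only [Fin.consEquiv, Equiv.coe_fn_mk, mcount_cons, mpow_madd]
  ring

/-- The Taylor polynomial of `ψ` at `y` of degree `< r`, evaluated at `x`. -/
def mtaylor (ψ : Ed d → ℝ) (r : ℕ) (y x : Ed d) : ℝ :=
  ∑ j ∈ Finset.range r, (j.factorial : ℝ)⁻¹ *
    ∑ m : Fin j → Fin d, mpow (x - y) (mcount m) * mderiv (mcount m) ψ y

lemma continuous_mtaylor (ψ : Ed d → ℝ) (r : ℕ) (y : Ed d) : Continuous (mtaylor ψ r y) :=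
  continuous_finsetSum _ fun _ _ => continuous_const.mul <|
    continuous_finsetSum _ fun m _ => (continuous_mpow_sub y (mcount m)).mul continuous_const

lemma IsTest.abs_sub_mtaylor_le {ψ : Ed d → ℝ} (hψ : IsTest ψ) (r : ℕ) (y x : Ed d) :
    |ψ x - mtaylor ψ r y x| ≤ d ^ r * ‖x - y‖ ^ r * crNorm r ψ := by
  have hbound : ∀ t ∈ Set.Icc (0:ℝ) 1, |∑ m : Fin r → Fin d, mpow (x - y) (mcount m) *
      mderiv (mcount m) ψ (y + t • (x - y))| ≤ d ^ r * ‖x - y‖ ^ r * crNorm r ψ := by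
    intro t _
    refine (Finset.abs_sum_le_sum_abs _ _).trans ?_
    refine (Finset.sum_le_sum fun m _ => (abs_mul _ _).trans_le (mul_le_mul
      (abs_mpow_mcount_le _ m) (hψ.abs_mderiv_le_crNorm (mdeg_mcount m).le _)
      (abs_nonneg _) (by positivity))).trans_eq ?_
    simp [mul_assoc]
  simpa [mtaylor, mcount_zero, mpow_zero, mderiv_zero] using
    abs_sub_taylor_sum_le r _ (fun j _ t => hasDerivAt_sum_words hψ.1 y (x - y) j t) hbound

end Taylor

section LocalEstimates

variable {g : Ed d → ℝ} {y : Ed d} {ψ : Ed d → ℝ}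

lemma abs_integral_mtaylor_mul_le (hψ : IsTest ψ) {r : ℕ} (hg : Continuous g)
    (hgc : HasCompactSupport g) {μ : ℝ}
    (hmom : ∀ l, mdeg l ≤ r → |∫ x, mpow (x - y) l * g x| ≤ μ) :
    |∫ x, mtaylor ψ r y x * g x| ≤ (∑ j ∈ Finset.range r, (d:ℝ) ^ j) * μ * crNorm r ψ := by
  set a : (j : ℕ) → (Fin j → Fin d) → ℝ := fun j m =>
    (j.factorial : ℝ)⁻¹ * mderiv (mcount m) ψ y
  have hint : ∀ j m, Integrable fun x => a j m * (mpow (x - y) (mcount m) * g x) := fun j m =>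
    (((continuous_mpow_sub y _).mul hg).integrable_of_hasCompactSupport hgc.mul_left).const_mul _
  have hexpand : ∫ x, mtaylor ψ r y x * g x = ∑ j ∈ Finset.range r, ∑ m : Fin j → Fin d,
      a j m * ∫ x, mpow (x - y) (mcount m) * g x := calc
    _ = ∫ x, ∑ j ∈ Finset.range r, ∑ m : Fin j → Fin d,
          a j m * (mpow (x - y) (mcount m) * g x) :=
        integral_congr_ae <| Filter.Eventually.of_forall fun x => by
          simp only [mtaylor, Finset.sum_mul, Finset.mul_sum, a]
          exact Finset.sum_congr rfl fun j _ => Finset.sum_congr rfl fun m _ => by ring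
    _ = _ := by
        rw [integral_finsetSum _ fun j _ => integrable_finsetSum _ fun m _ => hint j m]
        exact Finset.sum_congr rfl fun j _ => (integral_finsetSum _ fun m _ => hint j m).trans
          (Finset.sum_congr rfl fun m _ => integral_const_mul _ _)
  have hterm : ∀ j ∈ Finset.range r, ∀ m : Fin j → Fin d,
      |a j m * ∫ x, mpow (x - y) (mcount m) * g x| ≤ crNorm r ψ * μ := fun j hj m => by
    have hjr : mdeg (mcount m) ≤ r := by rw [mdeg_mcount]; exact (Finset.mem_range.1 hj).le
    have hfact : (j.factorial : ℝ)⁻¹ ≤ 1 := inv_le_one_of_one_le₀ (by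
      exact_mod_cast j.factorial_pos)
    have hcoef : |a j m| ≤ crNorm r ψ := by
      rw [abs_mul, abs_inv, Nat.abs_cast]
      simpa using mul_le_mul hfact (hψ.abs_mderiv_le_crNorm hjr y) (abs_nonneg _) zero_le_one
    rw [abs_mul]
    exact mul_le_mul hcoef (hmom _ hjr) (abs_nonneg _) (crNorm_nonneg r ψ)
  rw [hexpand]
  refine (Finset.abs_sum_le_sum_abs _ _).trans ?_
  refine (Finset.sum_le_sum fun j hj => (Finset.abs_sum_le_sum_abs _ _).trans
    (Finset.sum_le_sum fun m _ => hterm j hj m)).trans_eq ?_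
  simp only [Finset.sum_const, Finset.card_univ, Fintype.card_fun, Fintype.card_fin,
    nsmul_eq_mul, Nat.cast_pow, Finset.sum_mul]
  exact Finset.sum_congr rfl fun j _ => by ring

lemma volume_closedBall_toReal (y : Ed d) {R : ℝ} (hR : 0 ≤ R) :
    (volume (closedBall y R)).toReal = R ^ d * (volume (ball (0 : Ed d) 1)).toReal := by
  rw [Measure.addHaar_closedBall volume y hR, ENNReal.toReal_mul,
    ENNReal.toReal_ofReal (by positivity), finrank_euclideanSpace_fin]

lemma abs_integral_sub_mtaylor_mul_le (hψ : IsTest ψ) (r : ℕ) {R M : ℝ} (hR : 0 ≤ R)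
    (hgs : ∀ x, R < dist x y → g x = 0) (hgM : ∀ x ∈ closedBall y R, |g x| ≤ M) :
    |∫ x, (ψ x - mtaylor ψ r y x) * g x|
      ≤ d ^ r * R ^ (r + d) * M * (volume (ball (0 : Ed d) 1)).toReal * crNorm r ψ := by
  rw [← setIntegral_eq_integral_of_forall_compl_eq_zero (s := closedBall y R) fun x hx => by
    rw [hgs x (not_le.1 hx), mul_zero]]
  have hbound : ∀ x ∈ closedBall y R, ‖(ψ x - mtaylor ψ r y x) * g x‖
      ≤ d ^ r * R ^ r * crNorm r ψ * M := fun x hx => by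
    rw [norm_mul, Real.norm_eq_abs, Real.norm_eq_abs]
    refine mul_le_mul ((hψ.abs_sub_mtaylor_le r y x).trans ?_) (hgM x hx) (abs_nonneg _)
      (by positivity [crNorm_nonneg r ψ])
    gcongr
    · exact crNorm_nonneg r ψ
    · rw [← dist_eq_norm]; exact mem_closedBall.1 hx
  refine (norm_setIntegral_le_of_norm_le_const measure_closedBall_lt_top hbound).trans_eq ?_
  rw [measureReal_def, volume_closedBall_toReal y hR]
  ring

lemma abs_integral_mul_le_of_moments (hψ : IsTest ψ) (r : ℕ) {R M μ : ℝ} (hR : 0 ≤ R)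
    (hg : Continuous g) (hgs : ∀ x, R < dist x y → g x = 0)
    (hgM : ∀ x ∈ closedBall y R, |g x| ≤ M)
    (hmom : ∀ l, mdeg l ≤ r → |∫ x, mpow (x - y) l * g x| ≤ μ) :
    |∫ x, ψ x * g x| ≤ ((∑ j ∈ Finset.range r, (d:ℝ) ^ j) * μ
      + d ^ r * R ^ (r + d) * M * (volume (ball (0 : Ed d) 1)).toReal) * crNorm r ψ := by
  have hgc : HasCompactSupport g :=
    HasCompactSupport.of_support_subset_isCompact (isCompact_closedBall y R) fun x hx =>
      mem_closedBall.2 (not_lt.1 fun h => hx (hgs x h))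
  have h1 : Integrable fun x => mtaylor ψ r y x * g x :=
    ((continuous_mtaylor ψ r y).mul hg).integrable_of_hasCompactSupport hgc.mul_left
  have h2 : Integrable fun x => (ψ x - mtaylor ψ r y x) * g x :=
    ((hψ.1.continuous.sub (continuous_mtaylor ψ r y)).mul hg).integrable_of_hasCompactSupport
      hgc.mul_left
  have hsplit : ∫ x, ψ x * g x
      = (∫ x, mtaylor ψ r y x * g x) + ∫ x, (ψ x - mtaylor ψ r y x) * g x := by
    rw [← integral_add h1 h2]
    exact integral_congr_ae (Filter.Eventually.of_forall fun x => by ring)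
  rw [hsplit, add_mul]
  exact (abs_add_le _ _).trans (add_le_add (abs_integral_mtaylor_mul_le hψ hg hgc hmom)
    (abs_integral_sub_mtaylor_mul_le hψ r hR hgs hgM))

end LocalEstimates

section KernelIntegration

variable {Kf : Ed d → Ed d → ℝ} {φ ψ : Ed d → ℝ}

lemma kstar_add (hKf : Continuous (Function.uncurry Kf)) (hφ : Continuous φ)
    (hφc : HasCompactSupport φ) (hψ : Continuous ψ) (hψc : HasCompactSupport ψ) :
    kstar Kf (φ + ψ) = kstar Kf φ + kstar Kf ψ := funext fun y => by
  simp only [kstar, Pi.add_apply, add_mul]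
  exact integral_add (integrable_mul_apply hφ hφc hKf y) (integrable_mul_apply hψ hψc hKf y)

lemma kstar_smul (c : ℝ) (ψ : Ed d → ℝ) : kstar Kf (c • ψ) = c • kstar Kf ψ := funext fun y => by
  simp only [kstar, Pi.smul_apply, smul_eq_mul, mul_assoc, integral_const_mul]

lemma mderiv_apply_eq_zero_of_lt_dist {R : ℝ} (hKf : ∀ x y, Kf x y ≠ 0 → dist x y ≤ R)
    {x y : Ed d} (h : R < dist x y) (k : MIdx d) : mderiv k (Kf x) y = 0 := by
  refine mderiv_eq_zero_of_eqOn_zero isOpen_ball (fun z hz => ?_) k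
    (mem_ball_self (sub_pos.2 h))
  by_contra h0
  have := dist_triangle x z y
  linarith [hKf x z h0, mem_ball.1 hz]

lemma kstarDeriv_eq_zero_of_notMem_cthickening {R : ℝ} (hKf : ∀ x y, Kf x y ≠ 0 → dist x y ≤ R)
    {K : Set (Ed d)} (hψK : tsupport ψ ⊆ K) {y : Ed d} (hy : y ∉ cthickening R K) (k : MIdx d) :
    kstarDeriv Kf ψ k y = 0 := by
  refine integral_eq_zero_of_ae (Filter.Eventually.of_forall fun x => ?_)
  by_cases hψx : ψ x = 0
  · simp [hψx]
  refine mul_eq_zero_of_right _ (mderiv_apply_eq_zero_of_lt_dist hKf (not_le.1 fun hxy => hy ?_) k)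
  exact mem_cthickening_of_dist_le y x R K (hψK (subset_closure hψx)) (by rwa [dist_comm])

lemma tsupport_kstar_subset {R : ℝ} (hKf : ∀ x y, Kf x y ≠ 0 → dist x y ≤ R)
    {K : Set (Ed d)} (hψK : tsupport ψ ⊆ K) : tsupport (kstar Kf ψ) ⊆ cthickening R K := by
  refine closure_minimal (fun y hy => ?_) isClosed_cthickening
  by_contra hyK
  exact hy (kstarDeriv_zero (Kf := Kf) ▸ kstarDeriv_eq_zero_of_notMem_cthickening hKf hψK hyK 0)

end KernelIntegration

section RegularisingKernels

variable {β ρ : ℝ} {m r : ℕ} {Kn : ℕ → Ed d → Ed d → ℝ}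

lemma two_rpow_neg_natCast_le_one (n : ℕ) : (2:ℝ) ^ (-(n:ℝ)) ≤ 1 :=
  Real.rpow_le_one_of_one_le_of_nonpos one_le_two (by simp)

lemma RegKer.dist_le (hK : RegKer d β m r ρ Kn) (hρ : 0 < ρ) (n : ℕ) {x y : Ed d}
    (h : Kn n x y ≠ 0) : dist x y ≤ ρ :=
  (hK.2.1 n x y h).trans (mul_le_of_le_one_right hρ.le (two_rpow_neg_natCast_le_one n))

lemma RegKer.tsupport_kstar_subset (hK : RegKer d β m r ρ Kn) (hρ : 0 < ρ) (n : ℕ)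
    {ψ : Ed d → ℝ} {K : Set (Ed d)} (hψK : tsupport ψ ⊆ K) :
    tsupport (kstar (Kn n) ψ) ⊆ cthickening ρ K :=
  _root_.tsupport_kstar_subset (fun _ _ => hK.dist_le hρ n) hψK

lemma RegKer.hasCompactSupport_kstar (hK : RegKer d β m r ρ Kn) (hρ : 0 < ρ) (n : ℕ)
    {ψ : Ed d → ℝ} (hψ : HasCompactSupport ψ) : HasCompactSupport (kstar (Kn n) ψ) :=
  hψ.cthickening.of_isClosed_subset (isClosed_tsupport _) (hK.tsupport_kstar_subset hρ n le_rfl)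

lemma dyadic_scale_le {ρ β a : ℝ} (hρ : 0 ≤ ρ) {r : ℕ} (ha : a ≤ r) (n : ℕ) :
    (ρ * 2 ^ (-(n:ℝ))) ^ (r + d) * 2 ^ ((d - β + a) * n) ≤ ρ ^ (r + d) * 2 ^ (-(β * n)) := by
  rw [mul_pow, mul_assoc, ← Real.rpow_natCast ((2:ℝ) ^ (-(n:ℝ))), ← Real.rpow_mul zero_le_two,
    ← Real.rpow_add two_pos]
  gcongr
  · exact one_le_two
  · push_cast
    nlinarith [(n.cast_nonneg : (0:ℝ) ≤ n)]

lemma RegKer.abs_kstarDeriv_le (hK : RegKer d β 0 r ρ Kn) (hρ : 0 < ρ) {K : Set (Ed d)}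
    (hKc : IsCompact K) :
    ∃ C, ∀ ψ, IsTest ψ → tsupport ψ ⊆ K → ∀ n (k : MIdx d), mdeg k ≤ r → ∀ y,
      |kstarDeriv (Kn n) ψ k y| ≤ C * 2 ^ (-(β * n)) * crNorm r ψ := by
  obtain ⟨c, hc, hpt, hmom⟩ := hK.2.2 _ (hKc.cthickening (r := 2 * ρ))
  set Vd := (volume (ball (0 : Ed d) 1)).toReal
  set A := ∑ j ∈ Finset.range r, (d:ℝ) ^ j
  refine ⟨A * c + d ^ r * ρ ^ (r + d) * c * Vd, fun ψ hψ hψK n k hk y => ?_⟩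
  by_cases hy : y ∉ cthickening ρ K
  · rw [kstarDeriv_eq_zero_of_notMem_cthickening (fun _ _ => hK.dist_le hρ n) hψK hy, abs_zero]
    exact mul_nonneg (by positivity) (crNorm_nonneg r ψ)
  push Not at hy
  set ρn := ρ * 2 ^ (-(n:ℝ))
  have hρnρ : ρn ≤ ρ := mul_le_of_le_one_right hρ.le (two_rpow_neg_natCast_le_one n)
  have hyK : y ∈ cthickening (2 * ρ) K := cthickening_mono (by linarith) K hy
  have hxK : ∀ x ∈ closedBall y ρn, x ∈ cthickening (2 * ρ) K := fun x hx =>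
    cthickening_mono (by linarith) K <| cthickening_cthickening_subset (by positivity) hρ.le K
      (mem_cthickening_of_dist_le x y ρn _ hy (mem_closedBall.1 hx))
  have hmom' : ∀ l, mdeg l ≤ r →
      |∫ x, mpow (x - y) l * mderiv k (Kn n x) y| ≤ c * 2 ^ (-(β * n)) := by
    intro l hl
    simp_rw [mpow_sub_comm _ y, mul_assoc, integral_const_mul, abs_mul, abs_pow, abs_neg,
      abs_one, one_pow, one_mul]
    exact hmom n k l hk hl y hyK
  have hsup : ∀ x ∈ closedBall y ρn, |mderiv k (Kn n x) y| ≤ c * 2 ^ ((d - β + mdeg k) * n) := by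
    intro x hx
    simpa [mixDeriv, mderiv_zero, mdeg_zero] using
      hpt n 0 k (by simp [mdeg_zero]) hk x (hxK x hx) y hyK
  refine (abs_integral_mul_le_of_moments hψ r (by positivity)
    (((hK.1 n).continuous_mderiv hk).uncurry_right y)
    (fun x hx => mderiv_apply_eq_zero_of_lt_dist (hK.2.1 n) hx k) hsup hmom').trans ?_
  have hscale := dyadic_scale_le (d := d) hρ.le (β := β) (a := mdeg k) (by exact_mod_cast hk) n
  have := crNorm_nonneg r ψ
  calc _ = A * c * 2 ^ (-(β * n)) * crNorm r ψ + d ^ r * c * Vd * crNorm r ψ *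
        (ρn ^ (r + d) * 2 ^ ((d - β + mdeg k) * n)) := by ring
    _ ≤ A * c * 2 ^ (-(β * n)) * crNorm r ψ + d ^ r * c * Vd * crNorm r ψ *
        (ρ ^ (r + d) * 2 ^ (-(β * n))) := by gcongr
    _ = _ := by ring

lemma RegKer.crNorm_kstar_le (hK : RegKer d β 0 r ρ Kn) (hρ : 0 < ρ) {K : Set (Ed d)}
    (hKc : IsCompact K) :
    ∃ C, ∀ ψ, IsTest ψ → tsupport ψ ⊆ K → ∀ n,
      crNorm r (kstar (Kn n) ψ) ≤ C * (2 ^ (-β)) ^ n * crNorm r ψ := by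
  obtain ⟨C, hC⟩ := hK.abs_kstarDeriv_le hρ hKc
  refine ⟨max C 0, fun ψ hψ hψK n => crNorm_le (by positivity [crNorm_nonneg r ψ])
    fun k hk y => ?_⟩
  rw [mderiv_kstar (hK.1 n) hψ.1.continuous hψ.2 hk, ← Real.rpow_natCast,
    ← Real.rpow_mul zero_le_two, neg_mul]
  exact (hC ψ hψ hψK n k hk y).trans (by gcongr; exacts [crNorm_nonneg r ψ, le_max_left _ _])

end RegularisingKernels

section GeometricSeries

lemma summable_and_abs_tsum_le {a : ℕ → ℝ} {q D M : ℝ} (hq0 : 0 ≤ q) (hq1 : q < 1)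
    (h : ∀ n, |a n| ≤ D * q ^ n * M) : Summable a ∧ |∑' n, a n| ≤ D * (1 - q)⁻¹ * M := by
  have hsum : HasSum (fun n => D * q ^ n * M) (D * (1 - q)⁻¹ * M) :=
    ((hasSum_geometric_of_lt_one hq0 hq1).mul_left D).mul_right M
  exact ⟨Summable.of_norm_bounded hsum.summable h, by
    simpa only [Real.norm_eq_abs] using tsum_of_norm_bounded (f := a) hsum h⟩

variable {f : DFunc d} {T : ℕ → (Ed d → ℝ) → Ed d → ℝ} {q : ℝ}

lemma isDistribution_tsum (hq0 : 0 ≤ q) (hq1 : q < 1)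
    (hadd : ∀ n φ ψ, IsTest φ → IsTest ψ → f (T n (φ + ψ)) = f (T n φ) + f (T n ψ))
    (hsmul : ∀ n (c : ℝ) ψ, IsTest ψ → f (T n (c • ψ)) = c * f (T n ψ))
    (hbound : ∀ K, IsCompact K → ∃ (r : ℕ) (D : ℝ), ∀ ψ, IsTest ψ → tsupport ψ ⊆ K → ∀ n,
      |f (T n ψ)| ≤ D * q ^ n * crNorm r ψ) :
    IsDistribution (fun ψ => ∑' n, f (T n ψ)) ∧
      ∀ ψ, IsTest ψ → HasSum (fun n => f (T n ψ)) (∑' n, f (T n ψ)) := by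
  have hsum : ∀ ψ, IsTest ψ → Summable fun n => f (T n ψ) := fun ψ hψ => by
    obtain ⟨r, D, hD⟩ := hbound _ hψ.2.isCompact
    exact (summable_and_abs_tsum_le hq0 hq1 (hD ψ hψ le_rfl)).1
  refine ⟨⟨fun φ ψ hφ hψ => ?_, fun c ψ hψ => ?_, fun K hK => ?_⟩,
    fun ψ hψ => (hsum ψ hψ).hasSum⟩
  · simp only [hadd _ φ ψ hφ hψ]
    exact (hsum φ hφ).tsum_add (hsum ψ hψ)
  · simp only [hsmul _ c ψ hψ]
    exact tsum_mul_left
  · obtain ⟨r, D, hD⟩ := hbound K hK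
    exact ⟨r, D * (1 - q)⁻¹, fun ψ hψ hψK => (summable_and_abs_tsum_le hq0 hq1 (hD ψ hψ hψK)).2⟩

lemma distOrder_tsum (hq0 : 0 ≤ q) (hq1 : q < 1) {r : ℕ}
    (hbound : ∀ K, IsCompact K → ∃ D : ℝ, ∀ ψ, IsTest ψ → tsupport ψ ⊆ K → ∀ n,
      |f (T n ψ)| ≤ D * q ^ n * crNorm r ψ) :
    DistOrder (fun ψ => ∑' n, f (T n ψ)) r := fun K hK => by
  obtain ⟨D, hD⟩ := hbound K hK
  exact ⟨D * (1 - q)⁻¹, fun ψ hψ hψK => (summable_and_abs_tsum_le hq0 hq1 (hD ψ hψ hψK)).2⟩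

end GeometricSeries

section SingularIntegration

variable {β ρ : ℝ} {r : ℕ} {Kn : ℕ → Ed d → Ed d → ℝ} {f : DFunc d}

lemma abs_apply_le_of_crNorm_le {φ : Ed d → ℝ} {Cf B : ℝ} (hf : |f φ| ≤ Cf * crNorm r φ)
    (hB : crNorm r φ ≤ B) : |f φ| ≤ max Cf 0 * B :=
  hf.trans <| (mul_le_mul_of_nonneg_right (le_max_left _ _) (crNorm_nonneg r φ)).trans
    (mul_le_mul_of_nonneg_left hB (le_max_right _ _))

lemma OrderExt.abs_apply_kstar_le (hf : OrderExt f r) (hK : RegKer d β 0 r ρ Kn) (hρ : 0 < ρ)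
    {K : Set (Ed d)} (hKc : IsCompact K) :
    ∃ D : ℝ, ∀ ψ, IsTest ψ → tsupport ψ ⊆ K → ∀ n,
      |f (kstar (Kn n) ψ)| ≤ D * (2 ^ (-β)) ^ n * crNorm r ψ := by
  obtain ⟨C, hC⟩ := hK.crNorm_kstar_le hρ hKc
  obtain ⟨Cf, hCf⟩ := hf.2.2 _ (hKc.cthickening (r := ρ))
  refine ⟨max Cf 0 * C, fun ψ hψ hψK n => ?_⟩
  rw [mul_assoc (max Cf 0 * C), mul_assoc, ← mul_assoc C]
  exact abs_apply_le_of_crNorm_le (hCf _ (isCr_kstar (hK.1 n) hψ.1.continuous hψ.2)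
    (hK.hasCompactSupport_kstar hρ n hψ.2) (hK.tsupport_kstar_subset hρ n hψK)) (hC ψ hψ hψK n)

lemma isTest_kstar (hK : ∀ r, RegKer d β 0 r ρ Kn) (hρ : 0 < ρ) (n : ℕ) {ψ : Ed d → ℝ}
    (hψ : IsTest ψ) : IsTest (kstar (Kn n) ψ) :=
  ⟨contDiff_kstar (fun r => (hK r).1 n) hψ.1.continuous hψ.2,
    (hK 0).hasCompactSupport_kstar hρ n hψ.2⟩

lemma IsDistribution.abs_apply_kstar_le (hf : IsDistribution f)
    (hK : ∀ r, RegKer d β 0 r ρ Kn) (hρ : 0 < ρ) {K : Set (Ed d)} (hKc : IsCompact K) :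
    ∃ (r : ℕ) (D : ℝ), ∀ ψ, IsTest ψ → tsupport ψ ⊆ K → ∀ n,
      |f (kstar (Kn n) ψ)| ≤ D * (2 ^ (-β)) ^ n * crNorm r ψ := by
  obtain ⟨r, Cf, hCf⟩ := hf.2.2 _ (hKc.cthickening (r := ρ))
  obtain ⟨C, hC⟩ := (hK r).crNorm_kstar_le hρ hKc
  refine ⟨r, max Cf 0 * C, fun ψ hψ hψK n => ?_⟩
  rw [mul_assoc (max Cf 0 * C), mul_assoc, ← mul_assoc C]
  exact abs_apply_le_of_crNorm_le
    (hCf _ (isTest_kstar hK hρ n hψ) ((hK r).tsupport_kstar_subset hρ n hψK)) (hC ψ hψ hψK n)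

end SingularIntegration

/-- Proposition 2.8, singular integration: if `𝖪` is a regularising kernel
of order `(0,r)` and `f` is a distribution of order `r` (acting canonically on compactly
supported `C^r` functions), then `𝖪f(ψ) = Σ_n f(𝖪_n^*ψ)` converges for every test function
and defines a distribution of order `r`.  If the kernel is of order `(0,r)` for every `r`,
then `𝖪f` is well-defined for every distribution `f`. -/
theorem singular_integration
    (d : ℕ) (β ρ : ℝ) (hβ : 0 < β) (hρ : 0 < ρ)
    (Kn : ℕ → Ed d → Ed d → ℝ) :
    (∀ r : ℕ, RegKer d β 0 r ρ Kn →
      ∀ f : DFunc d, IsDistribution f → OrderExt f r →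
        ∃ g : DFunc d, IsDistribution g ∧ DistOrder g r ∧
          ∀ ψ : Ed d → ℝ, IsTest ψ → HasSum (fun n => f (kstar (Kn n) ψ)) (g ψ)) ∧
    ((∀ r : ℕ, RegKer d β 0 r ρ Kn) →
      ∀ f : DFunc d, IsDistribution f →
        ∃ g : DFunc d, IsDistribution g ∧
          ∀ ψ : Ed d → ℝ, IsTest ψ → HasSum (fun n => f (kstar (Kn n) ψ)) (g ψ)) := by
  have hq0 : (0:ℝ) ≤ 2 ^ (-β) := by positivity
  have hq1 : (2:ℝ) ^ (-β) < 1 := Real.rpow_lt_one_of_one_lt_of_neg one_lt_two (neg_lt_zero.2 hβ)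
  refine ⟨fun r hK f _ hext => ?_, fun hK f hf => ?_⟩
  · have hCr : ∀ n ψ, IsTest ψ → IsCr r (kstar (Kn n) ψ) :=
      fun n ψ hψ => isCr_kstar (hK.1 n) hψ.1.continuous hψ.2
    have hcs : ∀ n ψ, IsTest ψ → HasCompactSupport (kstar (Kn n) ψ) :=
      fun n ψ hψ => hK.hasCompactSupport_kstar hρ n hψ.2
    obtain ⟨hdist, hsum⟩ := isDistribution_tsum hq0 hq1
      (fun n φ ψ hφ hψ => by
        rw [kstar_add (hK.1 n).continuous hφ.1.continuous hφ.2 hψ.1.continuous hψ.2]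
        exact hext.1 _ _ (hCr n φ hφ) (hcs n φ hφ) (hCr n ψ hψ) (hcs n ψ hψ))
      (fun n c ψ hψ => by rw [kstar_smul]; exact hext.2.1 c _ (hCr n ψ hψ) (hcs n ψ hψ))
      fun K hK' => ⟨r, hext.abs_apply_kstar_le hK hρ hK'⟩
    exact ⟨_, hdist, distOrder_tsum hq0 hq1 fun K hK' => hext.abs_apply_kstar_le hK hρ hK', hsum⟩
  · obtain ⟨hdist, hsum⟩ := isDistribution_tsum hq0 hq1
      (fun n φ ψ hφ hψ => by
        rw [kstar_add ((hK 0).1 n).continuous hφ.1.continuous hφ.2 hψ.1.continuous hψ.2]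
        exact hf.1 _ _ (isTest_kstar hK hρ n hφ) (isTest_kstar hK hρ n hψ))
      (fun n c ψ hψ => by rw [kstar_smul]; exact hf.2.1 c _ (isTest_kstar hK hρ n hψ))
      fun K hK' => hf.abs_apply_kstar_le hK hρ hK'
    exact ⟨_, hdist, hsum⟩
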